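/- arXiv:1611.08060 — 7 statements merged into one kernel-verified Lean document; each statement's English description precedes it below -/
import Mathlib

section
/- Let ε ∈ (0,1), let (A, B, w, (B_i)_{i∈A}) be a (1,ε)-restricted allocation instance, let T > 0, and set k = ⌈T/ε⌉. For each i ∈ A write B_i^1 = {j ∈ B_i : w(j) = 1} and B_i^ε = {j ∈ B_i : w(j) = ε}. If the configuration LP CLP(T) is feasible, then there exist nonnegative reals x_{i,S} (i ∈ A, S ⊆ B) satisfying: (1) whenever x_{i,S} > 0, either S is a nonempty subset of B_i^1, or S ⊆ B_i^ε with |S| ≥ k; (2) Σ_S x_{i,S} ≥ 1 for every i ∈ A; (3) Σ_{(i,S) : j ∈ S} x_{i,S} ≤ 1 for every j ∈ B. -/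
open Finset

/-- **Obtaining a "minimal" solution from a feasible configuration-LP solution.**
If `CLP(T)` is feasible (witnessed by `x'`), then there is a fractional bundle
assignment `x` whose support consists of nonempty bundles of heavy items of
interest, or bundles of at least `k = ⌈T/ε⌉` light items of interest, which still
satisfies the covering and packing constraints. -/
theorem minimal_solution_from_clp
    {A B : Type*} [Fintype A] [Fintype B] [DecidableEq B]
    (ε : ℝ) (hε : ε ∈ Set.Ioo (0 : ℝ) 1)
    (w : B → ℝ) (hw : ∀ j, w j = 1 ∨ w j = ε)
    (Bi : A → Finset B)
    (T : ℝ) (hT : 0 < T)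
    (k : ℕ) (hk : k = ⌈T / ε⌉₊)
    (x' : A → Finset B → ℝ)
    (hx'0 : ∀ i S, 0 ≤ x' i S)
    (hsupp' : ∀ i S, 0 < x' i S → S ⊆ Bi i ∧ T ≤ ∑ j ∈ S, w j)
    (hcov' : ∀ i, 1 ≤ ∑ S : Finset B, x' i S)
    (hpack' : ∀ j : B,
      ∑ i : A, ∑ S ∈ Finset.univ.filter (fun S : Finset B => j ∈ S), x' i S ≤ 1) :
    ∃ x : A → Finset B → ℝ,
      (∀ i S, 0 ≤ x i S) ∧
      (∀ i S, 0 < x i S →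
        (S ⊆ (Bi i).filter (fun j => w j = 1) ∧ S.Nonempty) ∨
        (S ⊆ (Bi i).filter (fun j => w j = ε) ∧ k ≤ S.card)) ∧
      (∀ i, 1 ≤ ∑ S : Finset B, x i S) ∧
      (∀ j : B,
        ∑ i : A, ∑ S ∈ Finset.univ.filter (fun S : Finset B => j ∈ S), x i S ≤ 1) := by
  classical
  set f : Finset B → Finset B := fun S =>
    if (S.filter (fun j => w j = 1)).Nonempty then S.filter (fun j => w j = 1) else S with hf
  have hfsub : ∀ S, f S ⊆ S := by
    intro S
    simp only [hf]
    split
    · exact Finset.filter_subset _ _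
    · exact le_refl S
  refine ⟨fun i S => ∑ S' ∈ Finset.univ.filter (fun S' => f S' = S), x' i S', ?_, ?_, ?_, ?_⟩
  · intro i S
    exact Finset.sum_nonneg fun S' _ => hx'0 i S'
  · intro i S hpos
    obtain ⟨S', hS'mem, hS'pos⟩ : ∃ S' ∈ Finset.univ.filter (fun S' => f S' = S), 0 < x' i S' := by
      by_contra h
      push_neg at h
      have : (∑ S' ∈ Finset.univ.filter (fun S' => f S' = S), x' i S') ≤ 0 :=
        Finset.sum_nonpos fun S' hS' => h S' hS'
      linarith
    simp only [Finset.mem_filter, Finset.mem_univ, true_and] at hS'mem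
    obtain ⟨hsub, hwt⟩ := hsupp' i S' hS'pos
    by_cases hne : (S'.filter (fun j => w j = 1)).Nonempty
    · left
      have hS : S = S'.filter (fun j => w j = 1) := by rw [← hS'mem, hf]; simp [hne]
      constructor
      · rw [hS]
        intro j hj
        simp only [Finset.mem_filter] at hj ⊢
        exact ⟨hsub hj.1, hj.2⟩
      · rw [hS]; exact hne
    · right
      have hS : S = S' := by rw [← hS'mem, hf]; simp [hne]
      have hlight : ∀ j ∈ S', w j = ε := by
        intro j hj
        rcases hw j with h1 | h2
        · exact absurd ⟨j, Finset.mem_filter.2 ⟨hj, h1⟩⟩ hne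
        · exact h2
      constructor
      · rw [hS]
        intro j hj
        exact Finset.mem_filter.2 ⟨hsub hj, hlight j hj⟩
      · rw [hS, hk]
        apply Nat.ceil_le.2
        rw [div_le_iff₀ hε.1]
        calc T ≤ ∑ j ∈ S', w j := hwt
          _ = ∑ j ∈ S', ε := Finset.sum_congr rfl hlight
          _ = S'.card * ε := by rw [Finset.sum_const, nsmul_eq_mul]
  · intro i
    calc (1 : ℝ) ≤ ∑ S' : Finset B, x' i S' := hcov' i
      _ = ∑ S : Finset B, ∑ S' ∈ Finset.univ.filter (fun S' => f S' = S), x' i S' :=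
        (Finset.sum_fiberwise_of_maps_to (fun S' _ => Finset.mem_univ (f S')) _).symm
  · intro j
    have key : ∀ i : A,
        ∑ S ∈ Finset.univ.filter (fun S : Finset B => j ∈ S),
          ∑ S' ∈ Finset.univ.filter (fun S' => f S' = S), x' i S'
        ≤ ∑ S' ∈ Finset.univ.filter (fun S' : Finset B => j ∈ S'), x' i S' := by
      intro i
      rw [Finset.sum_fiberwise_eq_sum_filter]
      apply Finset.sum_le_sum_of_subset_of_nonneg
      · intro S' hS'
        simp only [Finset.mem_filter, Finset.mem_univ, true_and] at hS' ⊢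
        exact hfsub S' hS'
      · intro S' _ _
        exact hx'0 i S'
    calc ∑ i : A, ∑ S ∈ Finset.univ.filter (fun S : Finset B => j ∈ S),
          ∑ S' ∈ Finset.univ.filter (fun S' => f S' = S), x' i S'
        ≤ ∑ i : A, ∑ S' ∈ Finset.univ.filter (fun S' : Finset B => j ∈ S'), x' i S' :=
          Finset.sum_le_sum fun i _ => key i
      _ ≤ 1 := hpack' j
end

section
/- Let ε ∈ (0, 1/2]. Let X, Y, Z be pairwise disjoint finite sets with |X| = |Y| = |Z|, and let E ⊆ X × Y × Z be a set of hyperedges such that every z ∈ Z has degree d(z) ≥ 1 (d(z) is the number of edges of E containing z). Construct the (1,ε)-restricted allocation instance with agent set A = E, item set B = X ∪ Y ∪ Ẑ where Ẑ = {z^(1), …, z^(d(z)−1) : z ∈ Z} contains d(z) − 1 distinct copies of each z ∈ Z, weights w(j) = ε for j ∈ X ∪ Y and w(j) = 1 for j ∈ Ẑ, and interest sets B_e = {x, y, z^(1), …, z^(d(z)−1)} for each agent e = (x, y, z) ∈ E. Then there exists an allocation in which every agent receives total weight at least 2ε if and only if the hypergraph H(X ∪ Y ∪ Z, E) has a perfect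 matching (a set M ⊆ E of pairwise disjoint edges covering every node of X ∪ Y ∪ Z). -/
/-!
An allocation worth at least `2ε` to every agent forces, for each `z`, some edge at `z` to take
both its light items `x, y`: otherwise all `d(z)` edges at `z` would need one of the `d(z) - 1`
heavy copies of `z`, as a single light item is worth only `ε < 2ε`. These edges have distinct
`x`-coordinates, so there are at most `|X| = |Z|` of them, and as they cover `Z` they form a
perfect matching. Conversely, matched edges take their two light items and the at most
`d(z) - 1` unmatched edges at `z` take one heavy copy of `z` each, worth `1 ≥ 2ε`.
-/

open Finset

def IsPerfectMatching {α β γ : Type*} (X : Finset α) (Y : Finset β) (Z : Finset γ)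
    (M : Finset (α × β × γ)) : Prop :=
  (∀ e ∈ M, ∀ f ∈ M, e ≠ f → e.1 ≠ f.1 ∧ e.2.1 ≠ f.2.1 ∧ e.2.2 ≠ f.2.2) ∧
    Set.SurjOn Prod.fst (M : Set (α × β × γ)) X ∧
    Set.SurjOn (fun e : α × β × γ => e.2.1) M Y ∧ Set.SurjOn (fun e : α × β × γ => e.2.2) M Z

theorem isPerfectMatching_of_injOn_of_surjOn {α β γ : Type*} {X : Finset α} {Y : Finset β}
    {Z : Finset γ} {M : Finset (α × β × γ)} (hX : Set.MapsTo Prod.fst (M : Set (α × β × γ)) X)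
    (hY : Set.MapsTo (fun e : α × β × γ => e.2.1) M Y)
    (hZ : Set.MapsTo (fun e : α × β × γ => e.2.2) M Z)
    (hinjX : Set.InjOn Prod.fst (M : Set (α × β × γ)))
    (hinjY : Set.InjOn (fun e : α × β × γ => e.2.1) M)
    (hsurjZ : Set.SurjOn (fun e : α × β × γ => e.2.2) M Z) (hXY : #X = #Y) (hYZ : #Y = #Z) :
    IsPerfectMatching X Y Z M := by
  have hMX : #M ≤ #X := card_le_card_of_injOn _ hX hinjX
  have hZM : #Z ≤ #M := card_le_card_of_surjOn _ hsurjZ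
  have hinjZ := injOn_of_surjOn_of_card_le _ hZ hsurjZ (by omega)
  exact ⟨fun e he f hf hne => ⟨fun h => hne (hinjX he hf h), fun h => hne (hinjY he hf h),
      fun h => hne (hinjZ he hf h)⟩,
    surjOn_of_injOn_of_card_le _ hX hinjX (by omega),
    surjOn_of_injOn_of_card_le _ hY hinjY (by omega), hsurjZ⟩

namespace Finset

noncomputable def indexOf {α : Type*} [DecidableEq α] (s : Finset α) (a : α) : ℕ :=
  if h : a ∈ s then s.equivFin ⟨a, h⟩ else 0

variable {α : Type*} [DecidableEq α]

theorem indexOf_lt {s : Finset α} {a : α} (h : a ∈ s) : s.indexOf a < #s := by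
  rw [indexOf, dif_pos h]
  exact (s.equivFin ⟨a, h⟩).isLt

theorem injOn_indexOf (s : Finset α) : Set.InjOn s.indexOf s := by
  intro a (ha : a ∈ s) b (hb : b ∈ s) h
  rw [indexOf, dif_pos ha, indexOf, dif_pos hb] at h
  exact congrArg Subtype.val (s.equivFin.injective (Fin.ext h))

theorem card_filter_sdiff_lt {E M : Finset α} {p : α → Prop} [DecidablePred p] {a : α}
    (hM : M ⊆ E) (ha : a ∈ M) (hpa : p a) : #((E \ M).filter p) < #(E.filter p) :=
  card_lt_card ⟨filter_subset_filter _ sdiff_subset,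
    fun h => (mem_sdiff.1 (mem_filter.1 (h (mem_filter.2 ⟨hM ha, hpa⟩))).1).2 ha⟩

end Finset

section Reduction

variable {V : Type*} [DecidableEq V]

/- Items are `Sum.inl v`, the light item of a node `v ∈ X ∪ Y`, and `Sum.inr (z, t)`, the
`t`-th heavy copy of `z ∈ Z`. -/

theorem light_pair_mem_or_exists_heavy_mem {ε : ℝ} (hε0 : 0 < ε) {w : V ⊕ (V × ℕ) → ℝ}
    (hwl : ∀ v, w (Sum.inl v) = ε) {x y z : V} {n : ℕ} {S : Finset (V ⊕ (V × ℕ))}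
    (hS : S ⊆ {Sum.inl x, Sum.inl y} ∪ (range n).image (fun t => Sum.inr (z, t)))
    (hval : 2 * ε ≤ ∑ j ∈ S, w j) :
    (Sum.inl x ∈ S ∧ Sum.inl y ∈ S) ∨ ∃ t < n, Sum.inr (z, t) ∈ S := by
  by_contra! ⟨hpair, hheavy⟩
  have hlight : S ⊆ {Sum.inl x, Sum.inl y} := by
    intro j hj
    rcases mem_union.1 (hS hj) with h | h
    · exact h
    · obtain ⟨t, ht, rfl⟩ := mem_image.1 h
      exact absurd hj (hheavy t (mem_range.1 ht))
  obtain ⟨a, hSa⟩ : ∃ a, S ⊆ {Sum.inl a} := by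
    by_cases hx : Sum.inl x ∈ S
    · refine ⟨x, fun j hj => ?_⟩
      rcases mem_insert.1 (hlight hj) with rfl | h
      · exact mem_singleton_self _
      · exact absurd (mem_singleton.1 h ▸ hj) (hpair hx)
    · refine ⟨y, fun j hj => ?_⟩
      rcases mem_insert.1 (hlight hj) with rfl | h
      · exact absurd hj hx
      · exact h
  have : ∑ j ∈ S, w j ≤ ε := by
    calc ∑ j ∈ S, w j ≤ ∑ j ∈ {Sum.inl a}, w j :=
          sum_le_sum_of_subset_of_nonneg hSa fun j hj _ => by
            rw [mem_singleton.1 hj, hwl]; exact hε0.le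
      _ = ε := by rw [sum_singleton, hwl]
  linarith

variable {ε : ℝ} {E : Finset (V × V × V)} {d : V → ℕ} {w : V ⊕ (V × ℕ) → ℝ}
  {Be S : V × V × V → Finset (V ⊕ (V × ℕ))}

theorem exists_light_pair_of_allocation (hε0 : 0 < ε) (hwl : ∀ v, w (Sum.inl v) = ε)
    (hBe : ∀ e ∈ E, Be e = {Sum.inl e.1, Sum.inl e.2.1} ∪
      (range (d e.2.2 - 1)).image (fun t => Sum.inr (e.2.2, t)))
    (hsub : ∀ e ∈ E, S e ⊆ Be e) (hdisj : (E : Set (V × V × V)).PairwiseDisjoint S)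
    (hval : ∀ e ∈ E, 2 * ε ≤ ∑ j ∈ S e, w j) {z : V}
    (hd : d z = #(E.filter (fun e => e.2.2 = z))) (hdeg : 1 ≤ d z) :
    ∃ e ∈ E, e.2.2 = z ∧ Sum.inl e.1 ∈ S e ∧ Sum.inl e.2.1 ∈ S e := by
  by_contra! hnone
  have hheavy : ∀ e ∈ E.filter (fun e => e.2.2 = z), ∃ t < d z - 1, Sum.inr (z, t) ∈ S e := by
    intro e he
    obtain ⟨heE, rfl⟩ := mem_filter.1 he
    exact (light_pair_mem_or_exists_heavy_mem hε0 hwl (hBe e heE ▸ hsub e heE)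
      (hval e heE)).resolve_left fun h => hnone e heE rfl h.1 h.2
  choose! τ hτlt hτS using hheavy
  obtain ⟨e, he, f, hf, hne, hτ⟩ := exists_ne_map_eq_of_card_lt_of_maps_to
    (t := range (d z - 1)) (by rw [card_range]; omega) fun e he => mem_range.2 (hτlt e he)
  exact hne (hdisj.elim_finset (mem_filter.1 he).1 (mem_filter.1 hf).1 _ (hτS e he)
    (hτ ▸ hτS f hf))

theorem isPerfectMatching_of_allocation {X Y Z : Finset V} (hXY : #X = #Y) (hYZ : #Y = #Z)
    (hE : ∀ e ∈ E, e.1 ∈ X ∧ e.2.1 ∈ Y ∧ e.2.2 ∈ Z)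
    (hd : ∀ z, d z = #(E.filter (fun e => e.2.2 = z))) (hdeg : ∀ z ∈ Z, 1 ≤ d z)
    (hε0 : 0 < ε) (hwl : ∀ v, w (Sum.inl v) = ε)
    (hBe : ∀ e ∈ E, Be e = {Sum.inl e.1, Sum.inl e.2.1} ∪
      (range (d e.2.2 - 1)).image (fun t => Sum.inr (e.2.2, t)))
    (hsub : ∀ e ∈ E, S e ⊆ Be e) (hdisj : (E : Set (V × V × V)).PairwiseDisjoint S)
    (hval : ∀ e ∈ E, 2 * ε ≤ ∑ j ∈ S e, w j) :
    IsPerfectMatching X Y Z (E.filter fun e => Sum.inl e.1 ∈ S e ∧ Sum.inl e.2.1 ∈ S e) := by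
  refine isPerfectMatching_of_injOn_of_surjOn (fun e he => (hE e (mem_filter.1 he).1).1)
    (fun e he => (hE e (mem_filter.1 he).1).2.1) (fun e he => (hE e (mem_filter.1 he).1).2.2)
    ?_ ?_ ?_ hXY hYZ
  · intro e he f hf h
    exact hdisj.elim_finset (mem_filter.1 he).1 (mem_filter.1 hf).1 (Sum.inl e.1)
      (mem_filter.1 he).2.1 (h ▸ (mem_filter.1 hf).2.1)
  · intro e he f hf (h : e.2.1 = f.2.1)
    exact hdisj.elim_finset (mem_filter.1 he).1 (mem_filter.1 hf).1 (Sum.inl e.2.1)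
      (mem_filter.1 he).2.2 (h ▸ (mem_filter.1 hf).2.2)
  · intro z hz
    obtain ⟨e, heE, hez, hx, hy⟩ :=
      exists_light_pair_of_allocation hε0 hwl hBe hsub hdisj hval (hd z) (hdeg z hz)
    exact ⟨e, mem_filter.2 ⟨heE, hx, hy⟩, hez⟩

noncomputable def matchingAllocation (E M : Finset (V × V × V)) (e : V × V × V) :
    Finset (V ⊕ (V × ℕ)) :=
  if e ∈ M then {Sum.inl e.1, Sum.inl e.2.1}
  else {Sum.inr (e.2.2, ((E \ M).filter (fun g => g.2.2 = e.2.2)).indexOf e)}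

theorem matchingAllocation_subset {M : Finset (V × V × V)} (hME : M ⊆ E) {e : V × V × V}
    (he : e ∈ E) (hcov : ∃ f ∈ M, f.2.2 = e.2.2)
    (hd : d e.2.2 = #(E.filter (fun f => f.2.2 = e.2.2))) :
    matchingAllocation E M e ⊆ {Sum.inl e.1, Sum.inl e.2.1} ∪
      (range (d e.2.2 - 1)).image (fun t => Sum.inr (e.2.2, t)) := by
  unfold matchingAllocation
  split_ifs with heM
  · exact subset_union_left
  · obtain ⟨f, hfM, hfe⟩ := hcov
    have hlt := card_filter_sdiff_lt (p := fun f => f.2.2 = e.2.2) hME hfM hfe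
    have hidx := indexOf_lt (mem_filter.2 ⟨mem_sdiff.2 ⟨he, heM⟩, rfl⟩ :
      e ∈ (E \ M).filter (fun f => f.2.2 = e.2.2))
    rw [singleton_subset_iff]
    exact mem_union_right _ (mem_image.2 ⟨_, mem_range.2 (by omega), rfl⟩)

theorem pairwiseDisjoint_matchingAllocation {X Y : Finset V} (hXY : Disjoint X Y)
    {M : Finset (V × V × V)} (hMXY : ∀ e ∈ M, e.1 ∈ X ∧ e.2.1 ∈ Y)
    (hM : ∀ e ∈ M, ∀ f ∈ M, e ≠ f → e.1 ≠ f.1 ∧ e.2.1 ≠ f.2.1) :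
    (E : Set (V × V × V)).PairwiseDisjoint (matchingAllocation E M) := by
  intro e he f hf hne
  simp only [Function.onFun, matchingAllocation]
  split_ifs with heM hfM hfM
  · obtain ⟨hx, hy⟩ := hM e heM f hfM hne
    have hxy : ∀ a ∈ M, ∀ b ∈ M, a.1 ≠ b.2.1 := fun a ha b hb h =>
      disjoint_left.1 hXY (hMXY a ha).1 (h ▸ (hMXY b hb).2)
    simp only [disjoint_insert_left, disjoint_singleton_left, mem_insert, mem_singleton,
      Sum.inl.injEq, not_or]
    exact ⟨⟨hx, hxy e heM f hfM⟩, fun h => hxy f hfM e heM h.symm, hy⟩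
  · simp
  · simp
  · rw [disjoint_singleton]
    intro h
    simp only [Sum.inr.injEq, Prod.mk.injEq] at h
    obtain ⟨hz, hidx⟩ := h
    rw [hz] at hidx
    exact hne (injOn_indexOf ((E \ M).filter fun g => g.2.2 = f.2.2) (mem_filter.2 ⟨mem_sdiff.2 ⟨he, heM⟩, hz⟩)
      (mem_filter.2 ⟨mem_sdiff.2 ⟨hf, hfM⟩, rfl⟩) hidx)

theorem le_sum_matchingAllocation (hε : ε ≤ 1 / 2) (hwl : ∀ v, w (Sum.inl v) = ε)
    (hwh : ∀ p, w (Sum.inr p) = 1) {M : Finset (V × V × V)} {e : V × V × V}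
    (hxy : e ∈ M → e.1 ≠ e.2.1) : 2 * ε ≤ ∑ j ∈ matchingAllocation E M e, w j := by
  unfold matchingAllocation
  split_ifs with heM
  · rw [sum_pair (by simpa using hxy heM), hwl, hwl]
    linarith
  · rw [sum_singleton, hwh]
    linarith

end Reduction

theorem allocation_iff_three_dimensional_matching_general
    {V : Type*} [DecidableEq V]
    (ε : ℝ) (hε0 : 0 < ε) (hε : ε ≤ 1 / 2)
    (X Y Z : Finset V)
    (hXY : Disjoint X Y)
    (hXYcard : X.card = Y.card) (hYZcard : Y.card = Z.card)
    (E : Finset (V × V × V))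
    (hE : ∀ e ∈ E, e.1 ∈ X ∧ e.2.1 ∈ Y ∧ e.2.2 ∈ Z)
    (d : V → ℕ) (hd : ∀ z, d z = (E.filter (fun e => e.2.2 = z)).card)
    (hdeg : ∀ z ∈ Z, 1 ≤ d z)
    (w : V ⊕ (V × ℕ) → ℝ)
    (hwl : ∀ v, w (Sum.inl v) = ε) (hwh : ∀ p, w (Sum.inr p) = 1)
    (Be : V × V × V → Finset (V ⊕ (V × ℕ)))
    (hBe : ∀ e ∈ E, Be e = {Sum.inl e.1, Sum.inl e.2.1} ∪
      (Finset.range (d e.2.2 - 1)).image (fun t => Sum.inr (e.2.2, t))) :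
    (∃ S : V × V × V → Finset (V ⊕ (V × ℕ)),
      (∀ e ∈ E, S e ⊆ Be e) ∧
      (∀ e ∈ E, ∀ f ∈ E, e ≠ f → Disjoint (S e) (S f)) ∧
      (∀ e ∈ E, 2 * ε ≤ ∑ j ∈ S e, w j)) ↔
    (∃ M ⊆ E,
      (∀ e ∈ M, ∀ f ∈ M, e ≠ f →
        e.1 ≠ f.1 ∧ e.2.1 ≠ f.2.1 ∧ e.2.2 ≠ f.2.2) ∧
      (∀ v ∈ X, ∃ e ∈ M, e.1 = v) ∧
      (∀ v ∈ Y, ∃ e ∈ M, e.2.1 = v) ∧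
      (∀ v ∈ Z, ∃ e ∈ M, e.2.2 = v)) := by
  constructor
  · rintro ⟨S, hsub, hdisj, hval⟩
    exact ⟨E.filter fun e => Sum.inl e.1 ∈ S e ∧ Sum.inl e.2.1 ∈ S e, filter_subset _ _,
      isPerfectMatching_of_allocation hXYcard hYZcard hE hd hdeg hε0 hwl hBe hsub hdisj hval⟩
  · rintro ⟨M, hME, hM⟩
    have hMXY : ∀ e ∈ M, e.1 ∈ X ∧ e.2.1 ∈ Y := fun e he => (hE e (hME he)).imp_right And.left
    refine ⟨matchingAllocation E M, fun e he => ?_,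
      pairwiseDisjoint_matchingAllocation hXY hMXY
        fun e he f hf hne => (hM.1 e he f hf hne).imp_right And.left,
      fun e _ => le_sum_matchingAllocation hε hwl hwh fun he hxy =>
        disjoint_left.1 hXY (hMXY e he).1 (hxy ▸ (hMXY e he).2)⟩
    rw [hBe e he]
    exact matchingAllocation_subset hME he (hM.2.2.2 _ (hE e he).2.2) (hd _)

/-- **Hardness reduction from 3-dimensional matching.**
For the `(1,ε)`-restricted allocation instance built from a 3-dimensional matching
instance `H(X ∪ Y ∪ Z, E)` (agents are the edges; light items of weight `ε` are the
nodes of `X ∪ Y`; heavy items of weight `1` are `d(z) - 1` copies of each `z ∈ Z`;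
the interest set of an edge `(x,y,z)` is `{x, y}` together with all copies of `z`),
there is an allocation giving every agent total weight at least `2ε` iff `H` has a
perfect matching. -/
theorem allocation_iff_three_dimensional_matching
    {V : Type*} [Fintype V] [DecidableEq V]
    (ε : ℝ) (hε0 : 0 < ε) (hε : ε ≤ 1 / 2)
    (X Y Z : Finset V)
    (hXY : Disjoint X Y) (hXZ : Disjoint X Z) (hYZ : Disjoint Y Z)
    (hXYcard : X.card = Y.card) (hYZcard : Y.card = Z.card)
    (E : Finset (V × V × V))
    (hE : ∀ e ∈ E, e.1 ∈ X ∧ e.2.1 ∈ Y ∧ e.2.2 ∈ Z)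
    (d : V → ℕ) (hd : ∀ z, d z = (E.filter (fun e => e.2.2 = z)).card)
    (hdeg : ∀ z ∈ Z, 1 ≤ d z)
    (w : V ⊕ (V × ℕ) → ℝ)
    (hwl : ∀ v, w (Sum.inl v) = ε) (hwh : ∀ p, w (Sum.inr p) = 1)
    (Be : V × V × V → Finset (V ⊕ (V × ℕ)))
    (hBe : ∀ e ∈ E, Be e = {Sum.inl e.1, Sum.inl e.2.1} ∪
      (Finset.range (d e.2.2 - 1)).image (fun t => Sum.inr (e.2.2, t))) :
    (∃ S : V × V × V → Finset (V ⊕ (V × ℕ)),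
      (∀ e ∈ E, S e ⊆ Be e) ∧
      (∀ e ∈ E, ∀ f ∈ E, e ≠ f → Disjoint (S e) (S f)) ∧
      (∀ e ∈ E, 2 * ε ≤ ∑ j ∈ S e, w j)) ↔
    (∃ M ⊆ E,
      (∀ e ∈ M, ∀ f ∈ M, e ≠ f →
        e.1 ≠ f.1 ∧ e.2.1 ≠ f.2.1 ∧ e.2.2 ≠ f.2.2) ∧
      (∀ v ∈ X, ∃ e ∈ M, e.1 = v) ∧
      (∀ v ∈ Y, ∃ e ∈ M, e.2.1 = v) ∧
      (∀ v ∈ Z, ∃ e ∈ M, e.2.2 = v)) :=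
  allocation_iff_three_dimensional_matching_general ε hε0 hε X Y Z hXY hXYcard hYZcard E hE d hd
    hdeg w hwl hwh Be hBe
end

section
/- Let ε ∈ (0, 1). Let X, Y, Z be pairwise disjoint finite nonempty sets with |X| = |Y| = |Z|, and let E ⊆ X × Y × Z be such that every z ∈ Z has degree d(z) ≥ 1. Consider the (1,ε)-restricted allocation instance with agents A = E, items B = X ∪ Y ∪ Ẑ where Ẑ contains d(z) − 1 distinct copies of each z ∈ Z, weights ε on X ∪ Y and 1 on Ẑ, and B_e = {x, y, z^(1), …, z^(d(z)−1)} for e = (x, y, z). Then in every allocation, at least |Z| agents receive no heavy item (since the number of heavy items is Σ_{z∈Z}(d(z)−1) = |E| − |Z|), and consequently some agent receives total weight at most 2ε. In particular, OPT ≤ 2ε for this instance. -/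
open Finset

/-- **Upper bound on OPT for the hardness instance.**
In the `(1,ε)`-restricted allocation instance built from a 3-dimensional matching
instance, every allocation leaves at least `|Z|` agents with no heavy item
(only light items), and consequently some agent receives total weight at most
`2ε`; in particular `OPT ≤ 2ε`. -/
theorem hardness_instance_opt_le
    {V : Type*} [Fintype V] [DecidableEq V]
    (ε : ℝ) (hε0 : 0 < ε) (hε : ε < 1)
    (X Y Z : Finset V)
    (hX : X.Nonempty) (hY : Y.Nonempty) (hZ : Z.Nonempty)
    (hXY : Disjoint X Y) (hXZ : Disjoint X Z) (hYZ : Disjoint Y Z)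
    (hXYcard : X.card = Y.card) (hYZcard : Y.card = Z.card)
    (E : Finset (V × V × V))
    (hE : ∀ e ∈ E, e.1 ∈ X ∧ e.2.1 ∈ Y ∧ e.2.2 ∈ Z)
    (d : V → ℕ) (hd : ∀ z, d z = (E.filter (fun e => e.2.2 = z)).card)
    (hdeg : ∀ z ∈ Z, 1 ≤ d z)
    (w : V ⊕ (V × ℕ) → ℝ)
    (hwl : ∀ v, w (Sum.inl v) = ε) (hwh : ∀ p, w (Sum.inr p) = 1)
    (Be : V × V × V → Finset (V ⊕ (V × ℕ)))
    (hBe : ∀ e ∈ E, Be e = {Sum.inl e.1, Sum.inl e.2.1} ∪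
      (Finset.range (d e.2.2 - 1)).image (fun t => Sum.inr (e.2.2, t)))
    (S : V × V × V → Finset (V ⊕ (V × ℕ)))
    (hSsub : ∀ e ∈ E, S e ⊆ Be e)
    (hSdisj : ∀ e ∈ E, ∀ f ∈ E, e ≠ f → Disjoint (S e) (S f)) :
    Z.card ≤ (E.filter (fun e => ∀ j ∈ S e, j.isLeft = true)).card ∧
    ∃ e ∈ E, ∑ j ∈ S e, w j ≤ 2 * ε := by

  classical
  -- total degree equals |E|
  have hsumd : ∑ z ∈ Z, d z = E.card := by
    simp only [hd]
    exact (Finset.card_eq_sum_card_fiberwise (fun e he => (hE e he).2.2)).symm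
  -- agents receiving a heavy item
  set H := E.filter (fun e => ∃ j ∈ S e, j.isRight = true) with hH
  -- the set of heavy items
  set HS := Z.biUnion (fun z => (Finset.range (d z - 1)).image
      (fun t => (Sum.inr (z, t) : V ⊕ (V × ℕ)))) with hHS
  set f : V × V × V → V ⊕ (V × ℕ) :=
    fun e => if h : ∃ j ∈ S e, j.isRight = true then h.choose else Sum.inl e.1 with hf
  have hfmem : ∀ e ∈ H, f e ∈ S e ∧ (f e).isRight = true := by
    intro e he
    rw [hH, Finset.mem_filter] at he
    obtain ⟨heE, hex⟩ := he
    simp only [hf, dif_pos hex]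
    exact ⟨hex.choose_spec.1, hex.choose_spec.2⟩
  have hmaps : ∀ e ∈ H, f e ∈ HS := by
    intro e he
    have heE : e ∈ E := (Finset.mem_filter.mp he).1
    obtain ⟨hmem, hright⟩ := hfmem e he
    have : f e ∈ Be e := hSsub e heE hmem
    rw [hBe e heE, Finset.mem_union] at this
    rcases this with h | h
    · simp only [Finset.mem_insert, Finset.mem_singleton] at h
      rcases h with h | h <;> simp [h] at hright
    · obtain ⟨t, ht, hft⟩ := Finset.mem_image.mp h
      rw [hHS, Finset.mem_biUnion]
      exact ⟨e.2.2, (hE e heE).2.2, Finset.mem_image.mpr ⟨t, ht, hft⟩⟩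
  have hinj : Set.InjOn f H := by
    intro a ha b hb hab
    by_contra hne
    have hdisj := hSdisj a (Finset.mem_filter.mp ha).1 b (Finset.mem_filter.mp hb).1 hne
    have h1 := (hfmem a ha).1
    have h2 := (hfmem b hb).1
    rw [hab] at h1
    exact Finset.disjoint_left.mp hdisj h1 h2
  have hHcard : H.card ≤ HS.card := Finset.card_le_card_of_injOn f hmaps hinj
  -- |HS| + |Z| = |E|
  have hHScard : HS.card + Z.card = E.card := by
    rw [hHS, Finset.card_biUnion]
    · have : ∀ z ∈ Z, ((Finset.range (d z - 1)).image
          (fun t => (Sum.inr (z, t) : V ⊕ (V × ℕ)))).card = d z - 1 := by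
        intro z hz
        rw [Finset.card_image_of_injective _ (by intro a b h; simpa using h),
          Finset.card_range]
      rw [Finset.sum_congr rfl this, ← hsumd, Finset.card_eq_sum_ones Z,
        ← Finset.sum_add_distrib]
      refine Finset.sum_congr rfl fun z hz => ?_
      have := hdeg z hz
      omega
    · intro x hx y hy hxy
      simp only [Finset.disjoint_left, Finset.mem_image, Finset.mem_range]
      rintro j ⟨t, ht, rfl⟩ ⟨u, hu, hj⟩
      have h2 : y = x := (Prod.ext_iff.mp (Sum.inr.inj hj)).1
      exact hxy h2.symm
  -- light agents
  have hLH : (E.filter (fun e => ∀ j ∈ S e, j.isLeft = true)).card + H.card = E.card := by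
    rw [hH]
    have : ∀ e, (∀ j ∈ S e, j.isLeft = true) ↔ ¬ (∃ j ∈ S e, j.isRight = true) := by
      intro e
      constructor
      · rintro h ⟨j, hj, hr⟩
        have := h j hj
        cases j <;> simp_all
      · intro h j hj
        cases j with
        | inl v => rfl
        | inr p => exact absurd ⟨Sum.inr p, hj, rfl⟩ h
    have heq : E.filter (fun e => ∀ j ∈ S e, j.isLeft = true)
        = E.filter (fun e => ¬ ∃ j ∈ S e, j.isRight = true) := by
      apply Finset.filter_congr
      intro e _
      exact this e
    rw [heq, add_comm]
    exact Finset.card_filter_add_card_filter_not _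
  have hmain : Z.card ≤ (E.filter (fun e => ∀ j ∈ S e, j.isLeft = true)).card := by
    omega
  refine ⟨hmain, ?_⟩
  have hne : (E.filter (fun e => ∀ j ∈ S e, j.isLeft = true)).Nonempty := by
    rw [← Finset.card_pos]
    have := hZ.card_pos
    omega
  obtain ⟨e, he⟩ := hne
  rw [Finset.mem_filter] at he
  obtain ⟨heE, hlight⟩ := he
  refine ⟨e, heE, ?_⟩
  have hsub : S e ⊆ {Sum.inl e.1, Sum.inl e.2.1} := by
    intro j hj
    have hjB := hSsub e heE hj
    rw [hBe e heE, Finset.mem_union] at hjB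
    rcases hjB with h | h
    · exact h
    · obtain ⟨t, ht, hft⟩ := Finset.mem_image.mp h
      have := hlight j hj
      rw [← hft] at this
      simp at this
  have hne12 : (Sum.inl e.1 : V ⊕ (V × ℕ)) ≠ Sum.inl e.2.1 := by
    intro h
    have h1 := (hE e heE).1
    have h2 := (hE e heE).2.1
    rw [Sum.inl.inj h] at h1
    exact Finset.disjoint_left.mp hXY h1 h2
  calc ∑ j ∈ S e, w j ≤ ∑ j ∈ ({Sum.inl e.1, Sum.inl e.2.1} : Finset (V ⊕ (V × ℕ))), w j := by
        apply Finset.sum_le_sum_of_subset_of_nonneg hsub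
        intro j _ _
        cases j with
        | inl v => rw [hwl]; exact hε0.le
        | inr p => rw [hwh]; exact zero_le_one
    _ = 2 * ε := by
        rw [Finset.sum_pair hne12, hwl, hwl]; ring
end

section
/- Let ε be a real number with 0 < ε < 1/4 and T a real number with 1 ≤ T < 3/2. Set k = ⌈T/ε⌉ and r = ⌈k/(3+4ε)⌉. Then k ≥ 3r − 1. -/
/-- For `0 < ε < 1/4`, `1 ≤ T < 3/2`, `k = ⌈T/ε⌉` and `r = ⌈k/(3+4ε)⌉`,
we have `k ≥ 3r - 1`. -/
theorem k_ge_three_r_sub_one (ε T : ℝ) (hε0 : 0 < ε) (hε1 : ε < 1 / 4)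
    (hT1 : 1 ≤ T) (hT2 : T < 3 / 2)
    (k r : ℤ) (hk : k = ⌈T / ε⌉) (hr : r = ⌈(k : ℝ) / (3 + 4 * ε)⌉) :
    3 * r - 1 ≤ k := by
  have hke : (1 : ℝ) / ε ≤ (k : ℝ) := by
    rw [hk]
    refine le_trans ?_ (Int.le_ceil _)
    gcongr
  set q : ℤ := (k + 1) / 3 with hq
  have hq1 : 3 * q ≤ k + 1 := by omega
  have hq2 : k - 1 ≤ 3 * q := by omega
  have hq2' : (k : ℝ) - 1 ≤ 3 * (q : ℝ) := by exact_mod_cast hq2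
  have hpos : (0 : ℝ) < 3 + 4 * ε := by linarith
  have hek : 1 ≤ ε * (k : ℝ) := by
    rw [div_le_iff₀ hε0] at hke; linarith [hke]
  have hk4 : (4 : ℝ) < (k : ℝ) := by
    have : (4 : ℝ) < 1 / ε := by rw [lt_div_iff₀ hε0]; linarith
    linarith
  have hrq : r ≤ q := by
    rw [hr]
    apply Int.ceil_le.mpr
    rw [div_le_iff₀ hpos]
    nlinarith [mul_nonneg hε0.le (by linarith : (0:ℝ) ≤ (k:ℝ) - 1)]
  omega
end

section
/- Let ε be a real number with 0 < ε < 1/4 and T a real number with 1 ≤ T < 3/2. Set k = ⌈T/ε⌉ and r = ⌈k/(3+4ε)⌉. Then k − r + 1 ≥ (1 + ε/10)·(2r − 1). -/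
/-- For `0 < ε < 1/4`, `1 ≤ T < 3/2`, `k = ⌈T/ε⌉` and `r = ⌈k/(3+4ε)⌉`,
we have `k - r + 1 ≥ (1 + ε/10) · (2r - 1)`. -/
theorem k_sub_r_bound (ε T : ℝ) (hε0 : 0 < ε) (hε1 : ε < 1 / 4)
    (hT1 : 1 ≤ T) (hT2 : T < 3 / 2)
    (k r : ℤ) (hk : k = ⌈T / ε⌉) (hr : r = ⌈(k : ℝ) / (3 + 4 * ε)⌉) :
    (1 + ε / 10) * (2 * (r : ℝ) - 1) ≤ (k : ℝ) - (r : ℝ) + 1 := by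
  have hε : (0:ℝ) < 3 + 4 * ε := by linarith
  have hA : T / ε ≤ (k:ℝ) := hk ▸ Int.le_ceil _
  have hB : (k:ℝ) < T / ε + 1 := hk ▸ Int.ceil_lt_add_one _
  have hC : (k:ℝ) / (3 + 4 * ε) ≤ (r:ℝ) := hr ▸ Int.le_ceil _
  have hD : (r:ℝ) < (k:ℝ) / (3 + 4 * ε) + 1 := hr ▸ Int.ceil_lt_add_one _
  have hA' : T ≤ ε * k := by
    rw [div_le_iff₀ hε0] at hA; linarith
  have hB' : ε * k < T + ε := by
    have : (k:ℝ) - 1 < T / ε := by linarith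
    rw [lt_div_iff₀ hε0] at this; nlinarith
  have hC' : (k:ℝ) ≤ (3 + 4 * ε) * r := by
    rw [div_le_iff₀ hε] at hC; linarith
  have hD' : (3 + 4 * ε) * ((r:ℝ) - 1) < k := by
    have : (r:ℝ) - 1 < (k:ℝ) / (3 + 4 * ε) := by linarith
    rw [lt_div_iff₀ hε] at this; linarith
  -- r ≥ 1
  have hkpos : (0:ℝ) < k := by
    have : (0:ℝ) < T / ε := div_pos (by linarith) hε0
    linarith
  have hr1 : (1:ℤ) ≤ r := by
    have : (0:ℝ) < r := lt_of_lt_of_le (div_pos hkpos hε) hC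
    exact_mod_cast this
  have hr1' : (1:ℝ) ≤ r := by exact_mod_cast hr1
  -- k ≥ 3r - 2
  have hk2 : 3 * r - 2 ≤ k := by
    have h1 : (3:ℝ) * r - 3 < k := by nlinarith
    have h2 : 3 * r - 3 < k := by exact_mod_cast h1
    omega
  -- k ≥ 3r - 1
  have hk3 : 3 * r - 1 ≤ k := by
    by_contra h
    push_neg at h
    have hkeq : k = 3 * r - 2 := by omega
    have hkeq' : (k:ℝ) = 3 * r - 2 := by exact_mod_cast hkeq
    -- from hD': 4ε(r-1) < 1, so ε*k = ε(3r-2) < 3/4 + ε < 1 ≤ T ≤ ε*k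
    nlinarith [hD', hA', hε1, hT1, hε0.le]
  have hk3' : 3 * (r:ℝ) - 1 ≤ k := by exact_mod_cast hk3
  -- ε * (r - 1) < 1/2 + ε/3 from ε * hD' and ε*k < T + ε
  have key : ε * ((3 + 4 * ε) * ((r:ℝ) - 1)) < ε * k :=
    mul_lt_mul_of_pos_left hD' hε0
  nlinarith [key, hB', hk3', hr1', hε0.le, mul_nonneg hε0.le (sub_nonneg.mpr hr1')]
end

section
/- Let A be a finite set of agents and B a finite set of items, and for each i ∈ A let B_i^ε ⊆ B. Let k and r be positive integers with k ≥ 3r − 2. Let x_{i,S} be nonnegative reals indexed by i ∈ A and finite S ⊆ B such that x_{i,S} > 0 implies S ⊆ B_i^ε and |S| ≥ k, and such that Σ_{(i,S) : j ∈ S} x_{i,S} ≤ 1 for every j ∈ B. Let P ⊆ A and let W ⊆ B be a finite set of items with |W| < (2r − 1) · Σ_{i∈P} Σ_S x_{i,S}. Then there exists an agent i ∈ P with |B_i^ε \ W| ≥ r. -/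
open Finset

/-- **Existence of an addable light edge.**
Let `k ≥ 3r - 2` with `k, r ≥ 1`.  If the fractional mass of light bundles
(of size at least `k`) assigned to the agents in `P`, multiplied by `2r - 1`,
exceeds the number of light items `W` already in the alternating tree, then some
agent of `P` has at least `r` light items of interest outside `W`. -/
theorem exists_addable_light_edge
    {A B : Type*} [Fintype A] [Fintype B] [DecidableEq A] [DecidableEq B]
    (Bε : A → Finset B)
    (k r : ℕ) (hk0 : 0 < k) (hr0 : 0 < r) (hkr : 3 * r ≤ k + 2)
    (x : A → Finset B → ℝ)
    (hx0 : ∀ i S, 0 ≤ x i S)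
    (hsupp : ∀ i S, 0 < x i S → S ⊆ Bε i ∧ k ≤ S.card)
    (hpack : ∀ j : B,
      ∑ i : A, ∑ S ∈ Finset.univ.filter (fun S : Finset B => j ∈ S), x i S ≤ 1)
    (P : Finset A) (W : Finset B)
    (hW : (W.card : ℝ) < (2 * (r : ℝ) - 1) * ∑ i ∈ P, ∑ S : Finset B, x i S) :
    ∃ i ∈ P, r ≤ ((Bε i) \ W).card := by
  by_contra h
  push_neg at h
  have hcard : ∀ i ∈ P, ∀ S : Finset B, 0 < x i S →
      (2 * (r : ℝ) - 1) ≤ ((S ∩ W).card : ℝ) := by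
    intro i hi S hS
    obtain ⟨hsub, hk⟩ := hsupp i S hS
    have h1 : (S \ W).card ≤ ((Bε i) \ W).card :=
      card_le_card (sdiff_subset_sdiff hsub (Finset.Subset.refl W))
    have h2 : ((Bε i) \ W).card < r := h i hi
    have h3 : (S ∩ W).card + (S \ W).card = S.card := card_inter_add_card_sdiff S W
    have hle : 2 * r - 1 ≤ (S ∩ W).card := by omega
    have hle' : ((2 * r - 1 : ℕ) : ℝ) ≤ ((S ∩ W).card : ℝ) := Nat.cast_le.mpr hle
    have heq : ((2 * r - 1 : ℕ) : ℝ) = 2 * (r : ℝ) - 1 := by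
      rw [Nat.cast_sub (by omega)]; push_cast; ring
    linarith [hle', heq ▸ hle']
  have key : (2 * (r : ℝ) - 1) * ∑ i ∈ P, ∑ S : Finset B, x i S ≤
      ∑ i ∈ P, ∑ S : Finset B, x i S * ((S ∩ W).card : ℝ) := by
    rw [Finset.mul_sum]
    apply Finset.sum_le_sum
    intro i hi
    rw [Finset.mul_sum]
    apply Finset.sum_le_sum
    intro S _
    rcases eq_or_lt_of_le (hx0 i S) with he | hpos
    · simp [← he]
    · calc (2 * (r : ℝ) - 1) * x i S = x i S * (2 * (r : ℝ) - 1) := mul_comm _ _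
        _ ≤ x i S * ((S ∩ W).card : ℝ) :=
          mul_le_mul_of_nonneg_left (hcard i hi S hpos) (hx0 i S)
  have key2 : ∑ i ∈ P, ∑ S : Finset B, x i S * ((S ∩ W).card : ℝ) ≤
      ∑ i : A, ∑ S : Finset B, x i S * ((S ∩ W).card : ℝ) := by
    apply Finset.sum_le_sum_of_subset_of_nonneg (Finset.subset_univ P)
    intro i _ _
    exact Finset.sum_nonneg fun S _ => mul_nonneg (hx0 i S) (by positivity)
  have key3 : ∑ i : A, ∑ S : Finset B, x i S * ((S ∩ W).card : ℝ) =
      ∑ j ∈ W, ∑ i : A, ∑ S ∈ Finset.univ.filter (fun S : Finset B => j ∈ S), x i S := by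
    simp only [Finset.sum_filter]
    conv_rhs => rw [Finset.sum_comm]
    apply Finset.sum_congr rfl
    intro i _
    conv_rhs => rw [Finset.sum_comm]
    apply Finset.sum_congr rfl
    intro S _
    rw [Finset.sum_ite_mem, Finset.sum_const, nsmul_eq_mul, Finset.inter_comm, mul_comm]
  have key4 : ∑ j ∈ W, ∑ i : A, ∑ S ∈ Finset.univ.filter (fun S : Finset B => j ∈ S), x i S
      ≤ (W.card : ℝ) := by
    calc _ ≤ ∑ _j ∈ W, (1 : ℝ) := Finset.sum_le_sum fun j _ => hpack j
      _ = (W.card : ℝ) := by simp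
  linarith
end

section
/- Let μ = 10^{-10}. For every integer k ≥ 9, setting r = ⌈k/9⌉ and p = 3r − 1, the following inequality holds: r/(p − r + 1) ≤ (k − p − r + 1 − μ·(2k − (1 + μ²)·p + (2 + μ)·r)) / (k − p + r). (Both denominators p − r + 1 = 2r and k − p + r = k − 2r + 1 are positive for these values.) -/
/-- The key arithmetic inequality in the analysis of the polynomial-time
`9`-approximation algorithm: with `μ = 10⁻¹⁰`, for every integer `k ≥ 9`,
`r = ⌈k/9⌉` and `p = 3r - 1`,
`r/(p - r + 1) ≤ (k - p - r + 1 - μ(2k - (1 + μ²)p + (2 + μ)r)) / (k - p + r)`. -/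
theorem nine_approx_key_inequality (μ : ℝ) (hμ : μ = 1 / 10 ^ 10)
    (k r p : ℕ) (hk : 9 ≤ k) (hr : r = ⌈(k : ℝ) / 9⌉₊) (hp : p + 1 = 3 * r) :
    (r : ℝ) / ((p : ℝ) - (r : ℝ) + 1) ≤
      ((k : ℝ) - (p : ℝ) - (r : ℝ) + 1 -
          μ * (2 * (k : ℝ) - (1 + μ ^ 2) * (p : ℝ) + (2 + μ) * (r : ℝ))) /
        ((k : ℝ) - (p : ℝ) + (r : ℝ)) := by
  have hK : (9 : ℝ) ≤ (k : ℝ) := by exact_mod_cast hk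
  have h0 : (0 : ℝ) ≤ (k : ℝ) / 9 := by positivity
  have hle : (k : ℝ) / 9 ≤ (r : ℝ) := by rw [hr]; exact Nat.le_ceil _
  have hlt : (r : ℝ) < (k : ℝ) / 9 + 1 := by
    rw [hr]; exact Nat.ceil_lt_add_one h0
  have hP : (p : ℝ) = 3 * (r : ℝ) - 1 := by
    have : (p : ℝ) + 1 = 3 * (r : ℝ) := by exact_mod_cast hp
    linarith
  have hR1 : (1 : ℝ) ≤ (r : ℝ) := by nlinarith
  rw [hP]
  have hd1 : (0 : ℝ) < 3 * (r : ℝ) - 1 - (r : ℝ) + 1 := by nlinarith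
  have hd2 : (0 : ℝ) < (k : ℝ) - (3 * (r : ℝ) - 1) + (r : ℝ) := by nlinarith
  rw [div_le_div_iff₀ hd1 hd2]
  have h9 : 9 * r < k + 9 := by exact_mod_cast (show (9:ℝ) * r < k + 9 by linarith)
  have h9' : (9:ℝ) * r ≤ k + 8 := by exact_mod_cast Nat.lt_succ_iff.mp h9
  have hkey : 2 * (μ * (2 * (k : ℝ) - (1 + μ ^ 2) * (3 * (r : ℝ) - 1) + (2 + μ) * (r : ℝ)))
      ≤ (k : ℝ) - 6 * r + 3 := by subst hμ; norm_num; linarith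
  nlinarith [mul_le_mul_of_nonneg_left hkey (show (0:ℝ) ≤ (r:ℝ) by linarith)]
end
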